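/- Let p > 0 with 2/p ∈ ℕ, ω ≥ 0, γ > 0, φ ∈ [0,2π), and r > 0. Then 𝒥_{ω+γ,φ}^{[p]}(r) = (r^γ/(p^{γ−1}Γ(γ))) · ∫₀¹ 𝒥_{ω,φ}^{[p]}(τr)·τ^{(p−1)ω+1}·(1−τ^p)^{γ−1} dτ. -/

import Mathlib

/-!
Expanding `𝒥_{ω,φ}^{[p]}(τ r)` in its series, the `k`-th term against the weight
`τ^{(p-1)ω+1} (1 - τ^p)^{γ-1}` becomes, after the substitution `u = τ^p`, a Beta integral
`B(a_k, γ) / p` with `a_k = 2(k+1)/p + ω`. Since `Γ(a_k) B(a_k, γ) = Γ(a_k + γ) Γ(γ)`, this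
replaces `Γ(a_k)` by `Γ(a_k + γ)` in the denominator, i.e. `ω` by `ω + γ`. Termwise integration
is justified by absolute convergence: the Beta function is antitone in both arguments, which
bounds the inner Gamma sums by a multiple of `Γ(2(k+1)/p) (k+1) 4^k / (2k)!`.
-/

/-- The one-variable generalized Bessel function `𝒥_{ω,φ}^{[p]}(r)`, via its series. -/
noncomputable def calJ (p ω φ r : ℝ) : ℝ :=
  ((2 / p) ^ 2 / Real.Gamma (1 / p) ^ 2) *
    ∑' k : ℕ, (p ^ (2 * k) * (-1 : ℝ) ^ k / Real.Gamma ((2 / p) * ((k : ℝ) + 1) + ω)) *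
      (r / p) ^ (2 * (k : ℝ) + ω) *
      ∑ n ∈ Finset.range (k + 1),
        Real.Gamma ((2 * (n : ℝ) + 1) / p) * Real.Gamma ((2 * ((k - n : ℕ) : ℝ) + 1) / p) /
            ((Nat.factorial (2 * n) : ℝ) * (Nat.factorial (2 * (k - n)) : ℝ)) *
          (|Real.cos φ| ^ (4 * (n : ℝ) / p) * |Real.sin φ| ^ (4 * ((k - n : ℕ) : ℝ) / p))

open MeasureTheory Real Set ProbabilityTheory

theorem integral_rpow_mul_one_sub_rpow {a b : ℝ} (ha : 0 < a) (hb : 0 < b) :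
    ∫ x in Ioc (0 : ℝ) 1, x ^ (a - 1) * (1 - x) ^ (b - 1) = beta a b := by
  have hcpow : ∀ x ∈ uIcc (0 : ℝ) 1, (x : ℂ) ^ ((a : ℂ) - 1) * (1 - (x : ℂ)) ^ ((b : ℂ) - 1)
      = ((x ^ (a - 1) * (1 - x) ^ (b - 1) : ℝ) : ℂ) := by
    intro x hx
    rw [uIcc_of_le zero_le_one] at hx
    push_cast
    rw [Complex.ofReal_cpow hx.1, Complex.ofReal_cpow (by linarith [hx.2])]
    push_cast
    rfl
  rw [beta_eq_betaIntegralReal a b ha hb, Complex.betaIntegral,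
    intervalIntegral.integral_congr hcpow, intervalIntegral.integral_ofReal, Complex.ofReal_re,
    intervalIntegral.integral_of_le zero_le_one]

theorem integrableOn_rpow_mul_one_sub_rpow {a b : ℝ} (ha : 0 < a) (hb : 0 < b) :
    IntegrableOn (fun x : ℝ => x ^ (a - 1) * (1 - x) ^ (b - 1)) (Ioc 0 1) :=
  .of_integral_ne_zero <| by rw [integral_rpow_mul_one_sub_rpow ha hb]; exact (beta_pos ha hb).ne'

theorem beta_le_beta {a b x y : ℝ} (ha : 0 < a) (hb : 0 < b) (hx : a ≤ x) (hy : b ≤ y) :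
    beta x y ≤ beta a b := by
  rw [← integral_rpow_mul_one_sub_rpow ha hb,
    ← integral_rpow_mul_one_sub_rpow (ha.trans_le hx) (hb.trans_le hy),
    integral_Ioc_eq_integral_Ioo, integral_Ioc_eq_integral_Ioo]
  refine setIntegral_mono_on
    ((integrableOn_rpow_mul_one_sub_rpow (ha.trans_le hx) (hb.trans_le hy)).mono_set
      Ioo_subset_Ioc_self)
    ((integrableOn_rpow_mul_one_sub_rpow ha hb).mono_set Ioo_subset_Ioc_self)
    measurableSet_Ioo fun t ht => ?_
  have ht' : 0 < 1 - t := by linarith [ht.2]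
  exact mul_le_mul (rpow_le_rpow_of_exponent_ge ht.1 ht.2.le (by linarith))
    (rpow_le_rpow_of_exponent_ge ht' (by linarith [ht.1]) (by linarith))
    (rpow_nonneg ht'.le _) (rpow_nonneg ht.1.le _)

theorem Gamma_mul_Gamma_le {a b x y : ℝ} (ha : 0 < a) (hb : 0 < b) (hx : a ≤ x) (hy : b ≤ y) :
    Gamma x * Gamma y ≤ beta a b * Gamma (x + y) := by
  have := beta_le_beta ha hb hx hy
  rwa [beta, div_le_iff₀ (Gamma_pos_of_pos (by linarith))] at this

theorem integral_comp_rpow_Ioc (g : ℝ → ℝ) {p : ℝ} (hp : 0 < p) :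
    ∫ t in Ioc (0 : ℝ) 1, p * t ^ (p - 1) * g (t ^ p) = ∫ u in Ioc (0 : ℝ) 1, g u := by
  have himage : (· ^ p) '' Ioc (0 : ℝ) 1 = Ioc 0 1 := by
    ext u
    refine ⟨?_, fun hu => ⟨u ^ p⁻¹, ⟨by have := hu.1; positivity,
      rpow_le_one hu.1.le hu.2 (by positivity)⟩, by simp [← rpow_mul hu.1.le, hp.ne']⟩⟩
    rintro ⟨t, ht, rfl⟩
    exact ⟨rpow_pos_of_pos ht.1 p, rpow_le_one ht.1.le ht.2 hp.le⟩
  have := integral_image_eq_integral_abs_deriv_smul (measurableSet_Ioc (a := 0) (b := 1))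
    (fun t ht => (hasDerivAt_rpow_const (Or.inl ht.1.ne')).hasDerivWithinAt)
    ((rpow_left_injOn hp.ne').mono fun t ht => ht.1.le) g
  rw [himage] at this
  rw [this]
  refine setIntegral_congr_fun measurableSet_Ioc fun t ht => ?_
  rw [smul_eq_mul, abs_of_pos (by have := ht.1; positivity)]

theorem integral_rpow_mul_one_sub_rpow_rpow {p a b : ℝ} (hp : 0 < p) (ha : 0 < a) (hb : 0 < b) :
    ∫ t in Ioc (0 : ℝ) 1, t ^ (p * a - 1) * (1 - t ^ p) ^ (b - 1) = beta a b / p := by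
  rw [← integral_rpow_mul_one_sub_rpow ha hb,
    ← integral_comp_rpow_Ioc (fun u => u ^ (a - 1) * (1 - u) ^ (b - 1)) hp, eq_div_iff hp.ne',
    ← integral_mul_const]
  refine setIntegral_congr_fun measurableSet_Ioc fun t ht => ?_
  have hsplit : t ^ (p * a - 1) = t ^ (p - 1) * (t ^ p) ^ (a - 1) := by
    rw [← rpow_mul ht.1.le, ← rpow_add ht.1]; ring_nf
  rw [hsplit]; ring

theorem integrableOn_rpow_mul_one_sub_rpow_rpow {p a b : ℝ} (hp : 0 < p) (ha : 0 < a)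
    (hb : 0 < b) :
    IntegrableOn (fun t : ℝ => t ^ (p * a - 1) * (1 - t ^ p) ^ (b - 1)) (Ioc 0 1) :=
  .of_integral_ne_zero <| by
    rw [integral_rpow_mul_one_sub_rpow_rpow hp ha hb]; exact (div_pos (beta_pos ha hb) hp).ne'

theorem integral_tsum_mul_of_nonneg {α : Type*} [MeasurableSpace α] {μ : Measure α}
    {c : ℕ → ℝ} {g : ℕ → α → ℝ} (hg_nonneg : ∀ k, ∀ᵐ a ∂μ, 0 ≤ g k a)
    (hg : ∀ k, Integrable (g k) μ) (hsum : Summable fun k => |c k * ∫ a, g k a ∂μ|) :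
    ∫ a, ∑' k, c k * g k a ∂μ = ∑' k, c k * ∫ a, g k a ∂μ := by
  have hnorm : ∀ k, ∫ a, ‖c k * g k a‖ ∂μ = |c k * ∫ a, g k a ∂μ| := fun k => by
    rw [abs_mul, abs_of_nonneg (integral_nonneg_of_ae (hg_nonneg k)), ← integral_const_mul]
    refine integral_congr_ae <| (hg_nonneg k).mono fun a ha => ?_
    simp only [norm_mul, Real.norm_eq_abs, abs_of_nonneg ha]
  simp_rw [← integral_const_mul]
  exact (integral_tsum_of_summable_integral_norm (fun k => (hg k).const_mul (c k))
    (by simpa only [hnorm] using hsum)).symm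

noncomputable def calS (p φ : ℝ) (k : ℕ) : ℝ :=
  ∑ n ∈ Finset.range (k + 1),
    Gamma ((2 * (n : ℝ) + 1) / p) * Gamma ((2 * ((k - n : ℕ) : ℝ) + 1) / p) /
        ((Nat.factorial (2 * n) : ℝ) * (Nat.factorial (2 * (k - n)) : ℝ)) *
      (|cos φ| ^ (4 * (n : ℝ) / p) * |sin φ| ^ (4 * ((k - n : ℕ) : ℝ) / p))

noncomputable def calJTerm (p ω φ r : ℝ) (k : ℕ) : ℝ :=
  p ^ (2 * k) * (-1 : ℝ) ^ k / Gamma ((2 / p) * ((k : ℝ) + 1) + ω) *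
    (r / p) ^ (2 * (k : ℝ) + ω) * calS p φ k

theorem calJ_eq_tsum (p ω φ r : ℝ) :
    calJ p ω φ r = (2 / p) ^ 2 / Gamma (1 / p) ^ 2 * ∑' k, calJTerm p ω φ r k := rfl

theorem calS_nonneg {p : ℝ} (hp : 0 < p) (φ : ℝ) (k : ℕ) : 0 ≤ calS p φ k :=
  Finset.sum_nonneg fun n _ => by
    have := Gamma_pos_of_pos (show 0 < (2 * (n : ℝ) + 1) / p by positivity)
    have := Gamma_pos_of_pos (show 0 < (2 * ((k - n : ℕ) : ℝ) + 1) / p by positivity)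
    positivity

theorem factorial_two_mul_le {k n : ℕ} (hn : n ≤ k) :
    (2 * k).factorial ≤ 4 ^ k * ((2 * n).factorial * (2 * (k - n)).factorial) := by
  have hchoose : (2 * k).choose (2 * n) ≤ 4 ^ k := by
    rw [show 4 ^ k = 2 ^ (2 * k) by rw [pow_mul]; norm_num]
    exact Nat.choose_le_two_pow _ _
  calc (2 * k).factorial
        = (2 * k).choose (2 * n) * ((2 * n).factorial * (2 * (k - n)).factorial) := by
        rw [← mul_assoc, Nat.mul_sub, Nat.choose_mul_factorial_mul_factorial (by omega)]
    _ ≤ _ := Nat.mul_le_mul_right _ hchoose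

theorem calS_le {p : ℝ} (hp : 0 < p) (φ : ℝ) (k : ℕ) :
    calS p φ k ≤ beta (1 / p) (1 / p) * Gamma ((2 / p) * ((k : ℝ) + 1)) *
      (((k : ℝ) + 1) * 4 ^ k / (2 * k).factorial) := by
  have hp' : 0 < 1 / p := one_div_pos.2 hp
  calc calS p φ k ≤ ∑ _n ∈ Finset.range (k + 1),
        beta (1 / p) (1 / p) * Gamma ((2 / p) * ((k : ℝ) + 1)) * (4 ^ k / (2 * k).factorial) :=
        Finset.sum_le_sum fun n hn => ?_
    _ = _ := by rw [Finset.sum_const, Finset.card_range, nsmul_eq_mul]; push_cast; ring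
  have hnk : n ≤ k := Nat.lt_succ_iff.mp (Finset.mem_range.mp hn)
  have hGamma : Gamma ((2 * (n : ℝ) + 1) / p) * Gamma ((2 * ((k - n : ℕ) : ℝ) + 1) / p)
      ≤ beta (1 / p) (1 / p) * Gamma ((2 / p) * ((k : ℝ) + 1)) := by
    convert Gamma_mul_Gamma_le hp' hp' (x := (2 * (n : ℝ) + 1) / p)
      (y := (2 * ((k - n : ℕ) : ℝ) + 1) / p) (by gcongr; linarith [n.cast_nonneg (α := ℝ)])
      (by gcongr; linarith [(k - n).cast_nonneg (α := ℝ)]) using 3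
    rw [Nat.cast_sub hnk]; ring
  have hfact : ((2 * n).factorial * (2 * (k - n)).factorial : ℝ)⁻¹
      ≤ 4 ^ k / (2 * k).factorial := by
    rw [inv_eq_one_div, div_le_div_iff₀ (by positivity) (by positivity), one_mul]
    exact_mod_cast factorial_two_mul_le hnk
  have htrig : |cos φ| ^ (4 * (n : ℝ) / p) * |sin φ| ^ (4 * ((k - n : ℕ) : ℝ) / p) ≤ 1 :=
    mul_le_one₀ (rpow_le_one (abs_nonneg _) (abs_cos_le_one φ) (by positivity))
      (by positivity) (rpow_le_one (abs_nonneg _) (abs_sin_le_one φ) (by positivity))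
  have := Gamma_pos_of_pos (show 0 < (2 * (n : ℝ) + 1) / p by positivity)
  have := Gamma_pos_of_pos (show 0 < (2 * ((k - n : ℕ) : ℝ) + 1) / p by positivity)
  calc _ ≤ Gamma ((2 * (n : ℝ) + 1) / p) * Gamma ((2 * ((k - n : ℕ) : ℝ) + 1) / p) *
        ((2 * n).factorial * (2 * (k - n)).factorial : ℝ)⁻¹ :=
        mul_le_of_le_one_right (by positivity) htrig
    _ ≤ _ := mul_le_mul hGamma hfact (by positivity)
        (mul_nonneg (beta_pos hp' hp').le (Gamma_pos_of_pos (by positivity)).le)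

theorem summable_succ_mul_pow_div_factorial_two_mul {x : ℝ} (hx : 0 ≤ x) :
    Summable fun k : ℕ => ((k : ℝ) + 1) * x ^ k / (2 * k).factorial := by
  refine .of_nonneg_of_le (fun k => by positivity) (fun k => ?_)
    ((summable_pow_div_factorial (2 * x)).mul_left 2)
  have hk : (k : ℝ) + 1 ≤ 2 * 2 ^ k := by
    have : (k : ℝ) < 2 ^ k := by exact_mod_cast Nat.lt_two_pow_self
    have : (1 : ℝ) ≤ 2 ^ k := one_le_pow₀ one_le_two
    linarith
  have hfact : (k.factorial : ℝ) ≤ (2 * k).factorial := by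
    exact_mod_cast Nat.factorial_le (by omega)
  calc ((k : ℝ) + 1) * x ^ k / (2 * k).factorial ≤ 2 * 2 ^ k * x ^ k / k.factorial :=
        div_le_div₀ (by positivity) (by gcongr) (by positivity) hfact
    _ = 2 * ((2 * x) ^ k / k.factorial) := by ring

theorem summable_abs_calJTerm {p w r : ℝ} (hp : 0 < p) (hw : 0 < w) (hr : 0 ≤ r) (φ : ℝ) :
    Summable fun k => |calJTerm p w φ r k| := by
  refine .of_nonneg_of_le (fun k => abs_nonneg _) (fun k => ?_)
    ((summable_succ_mul_pow_div_factorial_two_mul (x := 4 * r ^ 2) (by positivity)).mul_left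
      ((r / p) ^ w * (beta (1 / p) (1 / p) * (beta (2 / p) w / Gamma w))))
  set A := (2 / p) * ((k : ℝ) + 1)
  have hA : 2 / p ≤ A := le_mul_of_one_le_right (by positivity) (by simp)
  have hGAw := Gamma_pos_of_pos (show 0 < A + w by positivity)
  have hratio : Gamma A / Gamma (A + w) ≤ beta (2 / p) w / Gamma w := by
    rw [div_le_div_iff₀ hGAw (Gamma_pos_of_pos hw)]
    exact Gamma_mul_Gamma_le (by positivity) hw hA le_rfl
  have hrpow : (r / p) ^ (2 * (k : ℝ) + w) = (r / p) ^ (2 * k) * (r / p) ^ w := by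
    rw [rpow_add' (by positivity) (by positivity), ← rpow_natCast]
    push_cast; rfl
  have habs : |calJTerm p w φ r k| = (r / p) ^ w * (r ^ 2) ^ k * (calS p φ k / Gamma (A + w)) := by
    rw [calJTerm, abs_mul, abs_mul, abs_div, abs_mul, abs_pow, abs_pow, abs_neg, abs_one, one_pow,
      abs_of_pos hp, abs_of_pos hGAw, abs_of_nonneg (calS_nonneg hp φ k),
      abs_of_nonneg (by positivity), hrpow, ← pow_mul, div_pow]
    field_simp
  calc |calJTerm p w φ r k| = (r / p) ^ w * (r ^ 2) ^ k * (calS p φ k / Gamma (A + w)) := habs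
    _ ≤ (r / p) ^ w * (r ^ 2) ^ k * (beta (1 / p) (1 / p) * Gamma A *
          (((k : ℝ) + 1) * 4 ^ k / (2 * k).factorial) / Gamma (A + w)) := by
        gcongr
        exact calS_le hp φ k
    _ = (r / p) ^ w * (r ^ 2) ^ k * (beta (1 / p) (1 / p) * (Gamma A / Gamma (A + w)) *
          (((k : ℝ) + 1) * 4 ^ k / (2 * k).factorial)) := by ring
    _ ≤ (r / p) ^ w * (r ^ 2) ^ k * (beta (1 / p) (1 / p) * (beta (2 / p) w / Gamma w) *
          (((k : ℝ) + 1) * 4 ^ k / (2 * k).factorial)) := by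
        have := beta_pos (one_div_pos.2 hp) (one_div_pos.2 hp)
        gcongr
    _ = _ := by rw [mul_pow]; ring

theorem calJ_mul_rpow_eq_tsum {p ω φ r τ : ℝ} (hp : 0 < p) (hr : 0 ≤ r) (hτ : 0 < τ) :
    calJ p ω φ (τ * r) * τ ^ ((p - 1) * ω + 1) = (2 / p) ^ 2 / Gamma (1 / p) ^ 2 *
      ∑' k, calJTerm p ω φ r k * τ ^ (p * ((2 / p) * ((k : ℝ) + 1) + ω) - 1) := by
  rw [calJ_eq_tsum, mul_assoc, ← tsum_mul_right]
  congr 1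
  refine tsum_congr fun k => ?_
  have hexp : 2 * (k : ℝ) + ω + ((p - 1) * ω + 1) = p * ((2 / p) * ((k : ℝ) + 1) + ω) - 1 := by
    field_simp; ring
  rw [calJTerm, calJTerm, mul_div_assoc τ r p, mul_rpow hτ.le (by positivity), ← hexp,
    rpow_add hτ (2 * (k : ℝ) + ω)]
  ring

theorem calJTerm_mul_beta_div {p ω r : ℝ} (γ : ℝ) (hp : 0 < p) (hω : 0 ≤ ω) (hr : 0 < r)
    (φ : ℝ) (k : ℕ) :
    calJTerm p ω φ r k * (beta ((2 / p) * ((k : ℝ) + 1) + ω) γ / p) =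
      p ^ (γ - 1) * Gamma γ / r ^ γ * calJTerm p (ω + γ) φ r k := by
  have hGamma := Gamma_pos_of_pos (show 0 < (2 / p) * ((k : ℝ) + 1) + ω by positivity)
  have hrpow : (r / p) ^ (2 * (k : ℝ) + (ω + γ)) = (r / p) ^ (2 * (k : ℝ) + ω) * r ^ γ / p ^ γ := by
    rw [← add_assoc, rpow_add (by positivity), div_rpow hr.le hp.le γ, mul_div_assoc]
  have := rpow_pos_of_pos hr γ
  have := rpow_pos_of_pos hp γ
  rw [calJTerm, calJTerm, beta, hrpow, rpow_sub_one hp.ne', ← add_assoc]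
  field_simp

theorem calJ_integral_recursion (p ω γ φ r : ℝ) (hp : 0 < p) (hω : 0 ≤ ω) (hγ : 0 < γ)
    (hr : 0 < r) :
    calJ p (ω + γ) φ r =
      r ^ γ / (p ^ (γ - 1) * Real.Gamma γ) *
        ∫ τ in (0 : ℝ)..1,
          calJ p ω φ (τ * r) * τ ^ ((p - 1) * ω + 1) * (1 - τ ^ p) ^ (γ - 1) := by
  set A : ℕ → ℝ := fun k => (2 / p) * ((k : ℝ) + 1) + ω
  set g : ℕ → ℝ → ℝ := fun k τ => τ ^ (p * A k - 1) * (1 - τ ^ p) ^ (γ - 1)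
  have hA : ∀ k, 0 < A k := fun k => by positivity
  have hg_nonneg : ∀ k, ∀ᵐ τ ∂volume.restrict (Ioc (0 : ℝ) 1), 0 ≤ g k τ := fun k =>
    ae_restrict_of_forall_mem measurableSet_Ioc fun τ hτ => mul_nonneg (rpow_nonneg hτ.1.le _)
      (rpow_nonneg (sub_nonneg.2 (rpow_le_one hτ.1.le hτ.2 hp.le)) _)
  have hterm : ∀ k, calJTerm p ω φ r k * ∫ τ in Ioc 0 1, g k τ =
      p ^ (γ - 1) * Gamma γ / r ^ γ * calJTerm p (ω + γ) φ r k := fun k => by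
    rw [integral_rpow_mul_one_sub_rpow_rpow hp (hA k) hγ, calJTerm_mul_beta_div γ hp hω hr]
  have hsum : Summable fun k => |calJTerm p ω φ r k * ∫ τ in Ioc 0 1, g k τ| := by
    simp_rw [hterm, abs_mul]
    exact (summable_abs_calJTerm hp (by positivity) hr.le φ).mul_left _
  have hintegrand : ∀ τ ∈ Ioc (0 : ℝ) 1,
      calJ p ω φ (τ * r) * τ ^ ((p - 1) * ω + 1) * (1 - τ ^ p) ^ (γ - 1) =
        (2 / p) ^ 2 / Gamma (1 / p) ^ 2 * ∑' k, calJTerm p ω φ r k * g k τ := fun τ hτ => by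
    rw [calJ_mul_rpow_eq_tsum hp hr.le hτ.1, mul_assoc, ← tsum_mul_right]
    simp only [g, A, mul_assoc]
  rw [intervalIntegral.integral_of_le zero_le_one,
    setIntegral_congr_fun measurableSet_Ioc hintegrand,
    integral_const_mul, integral_tsum_mul_of_nonneg hg_nonneg
      (fun k => integrableOn_rpow_mul_one_sub_rpow_rpow hp (hA k) hγ) hsum,
    tsum_congr hterm, tsum_mul_left, calJ_eq_tsum]
  have := rpow_pos_of_pos hr γ
  have := rpow_pos_of_pos hp (γ - 1)
  have := Gamma_pos_of_pos hγ
  field_simp
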